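/- For a Hausdorff pretopological space (X, π) the following are equivalent: (1) (X, rπ) is compact (X is PHC); (2) every π-cover C of X has C₁,…,Cₙ ∈ C with X = adh_π C₁ ∪ … ∪ adh_π Cₙ; (3) every inherent filter on X has nonempty π-adherence; (4) for every filter F on X, adh_π F¹ ≠ ∅. -/

import Mathlib

open Set Filter

/-- A pretopological space: a vicinity filter at each point containing the point. -/
structure Pretop (X : Type*) where
  V : X → Filter X
  pure_le : ∀ x : X, (pure x : Filter X) ≤ V x

/-- Two filters meet (`F # G`). -/
def Meets {X : Type*} (F G : Filter X) : Prop :=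
  ∀ A ∈ F, ∀ B ∈ G, (A ∩ B).Nonempty

namespace Pretop

variable {X Y : Type*} (π : Pretop X)

/-- Convergence: `F → x` iff `F ⊇ V x`. -/
def Conv (F : Filter X) (x : X) : Prop := F ≤ π.V x

/-- Adherence of a filter. -/
def adh (F : Filter X) : Set X := {x | Meets (π.V x) F}

/-- Adherence of a set (adherence of its principal filter). -/
def adhS (A : Set X) : Set X := {x | ∀ U ∈ π.V x, (U ∩ A).Nonempty}

/-- Inherence of a set. -/
def inh (A : Set X) : Set X := (π.adhS Aᶜ)ᶜ

/-- A compact pretopological space: every proper filter has nonempty adherence. -/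
def IsCompactPre : Prop := ∀ F : Filter X, F.NeBot → (π.adh F).Nonempty

/-- Hausdorff: distinct points have disjoint vicinities. -/
def HausdorffPre : Prop :=
  ∀ x y : X, x ≠ y → ∃ U ∈ π.V x, ∃ W ∈ π.V y, U ∩ W = ∅

/-- `F` is compact at `A`: every filter meeting `F` has adherence meeting `A`. -/
def CompactAt (F : Filter X) (A : Set X) : Prop :=
  ∀ G : Filter X, Meets G F → (π.adh G ∩ A).Nonempty

/-- A cover of `A`: every point of `A` has a member of `C` as a vicinity. -/
def IsCover (C : Set (Set X)) (A : Set X) : Prop :=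
  ∀ x ∈ A, ∃ U ∈ C, U ∈ π.V x

/-- Cover-compactness. -/
def CoverCompact (A : Set X) : Prop :=
  ∀ C : Set (Set X), π.IsCover C A →
    ∃ D : Finset (Set X), ↑D ⊆ C ∧ A ⊆ π.inh (⋃ U ∈ D, U)

lemma mem_of_vicinity {x : X} {U : Set X} (h : U ∈ π.V x) : x ∈ U := π.pure_le x h

lemma subset_adhS (A : Set X) : A ⊆ π.adhS A :=
  fun x hx U hU => ⟨x, π.mem_of_vicinity hU, hx⟩

lemma adhS_mono {A B : Set X} (h : A ⊆ B) : π.adhS A ⊆ π.adhS B :=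
  fun x hx U hU => (hx U hU).imp fun y hy => ⟨hy.1, h hy.2⟩

lemma adhS_empty : π.adhS (∅ : Set X) = ∅ := by
  ext x
  simp only [adhS, mem_setOf_eq, Set.inter_empty, Set.mem_empty_iff_false, iff_false]
  intro h
  simpa using h univ univ_mem

lemma adhS_union (A B : Set X) : π.adhS (A ∪ B) = π.adhS A ∪ π.adhS B := by
  apply Subset.antisymm
  · intro x hx
    by_contra hc
    simp only [Set.mem_union, not_or] at hc
    obtain ⟨h1, h2⟩ := hc
    simp only [adhS, mem_setOf_eq, not_forall] at h1 h2
    obtain ⟨U, hU, hUA⟩ := h1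
    obtain ⟨W, hW, hWB⟩ := h2
    obtain ⟨z, hz⟩ := hx (U ∩ W) (inter_mem hU hW)
    rcases hz.2 with hA | hB
    · exact hUA ⟨z, hz.1.1, hA⟩
    · exact hWB ⟨z, hz.1.2, hB⟩
  · exact Set.union_subset (π.adhS_mono Set.subset_union_left)
      (π.adhS_mono Set.subset_union_right)

lemma inh_mono {A B : Set X} (h : A ⊆ B) : π.inh A ⊆ π.inh B :=
  Set.compl_subset_compl.mpr (π.adhS_mono (Set.compl_subset_compl.mpr h))

lemma inh_inter (A B : Set X) : π.inh (A ∩ B) = π.inh A ∩ π.inh B := by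
  simp only [inh, Set.compl_inter, adhS_union, Set.compl_union]

lemma inh_univ : π.inh (univ : Set X) = univ := by
  simp [inh, adhS_empty]

lemma inh_subset (A : Set X) : π.inh A ⊆ A := by
  intro x hx
  by_contra hxA
  exact hx (π.subset_adhS Aᶜ hxA)

/-- The filter `F¹` of members of `F` whose inherence also belongs to `F`. -/
def F1 (F : Filter X) : Filter X where
  sets := {A | A ∈ F ∧ π.inh A ∈ F}
  univ_sets := ⟨univ_mem, by rw [π.inh_univ]; exact univ_mem⟩
  sets_of_superset := fun hA hAB =>
    ⟨mem_of_superset hA.1 hAB, mem_of_superset hA.2 (π.inh_mono hAB)⟩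
  inter_sets := fun hA hB =>
    ⟨inter_mem hA.1 hB.1, by rw [π.inh_inter]; exact inter_mem hA.2 hB.2⟩

lemma mem_F1 {F : Filter X} {A : Set X} : A ∈ π.F1 F ↔ A ∈ F ∧ π.inh A ∈ F := Iff.rfl

/-- The partial regularization `rπ`: vicinities generated by adherences of vicinities. -/
def rpre : Pretop X where
  V x := (π.V x).lift' π.adhS
  pure_le x := le_lift'.mpr fun U hU =>
    mem_pure.mpr (π.subset_adhS U (π.mem_of_vicinity hU))

lemma mem_rpre {x : X} {A : Set X} :
    A ∈ (π.rpre).V x ↔ ∃ U ∈ π.V x, π.adhS U ⊆ A :=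
  mem_lift'_sets fun _ _ h => π.adhS_mono h

end Pretop

/-- Continuity of maps between pretopological spaces. -/
def ContPre {X Y : Type*} (π : Pretop X) (τ : Pretop Y) (f : X → Y) : Prop :=
  ∀ x : X, ∀ W ∈ τ.V (f x), ∃ U ∈ π.V x, f '' U ⊆ W

/-- Perfect maps between pretopological spaces. -/
def PerfectPre {X Y : Type*} (π : Pretop X) (τ : Pretop Y) (f : X → Y) : Prop :=
  ∀ (F : Filter Y) (y : Y), τ.Conv F y → π.CompactAt (F.comap f) (f ⁻¹' {y})

/-- The filter of vicinities of a set `A`. -/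
def VSet {X : Type*} (π : Pretop X) (A : Set X) : Filter X where
  sets := {V | A ⊆ π.inh V}
  univ_sets := by simp [π.inh_univ]
  sets_of_superset := fun h hsub => h.trans (π.inh_mono hsub)
  inter_sets := fun h1 h2 => by
    rw [Set.mem_setOf_eq, π.inh_inter]; exact Set.subset_inter h1 h2

lemma mem_VSet {X : Type*} {π : Pretop X} {A V : Set X} :
    V ∈ VSet π A ↔ A ⊆ π.inh V := Iff.rfl

/-- `f^#[A] = {y : f⁻¹(y) ⊆ A}`. -/
def fsharp {X Y : Type*} (f : X → Y) (A : Set X) : Set Y := {y | f ⁻¹' {y} ⊆ A}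

/-- The θ-quotient pretopology on `Y`. -/
def thetaQuot {X Y : Type*} (π : Pretop X) (f : X → Y) : Pretop Y where
  V y := (VSet π (f ⁻¹' {y})).lift' (fsharp f)
  pure_le y := le_lift'.mpr fun V hV =>
    mem_pure.mpr (fun x hx => π.inh_subset V ((mem_VSet.mp hV) hx))

/-- Strong irreducibility. -/
def StronglyIrreducible {X Y : Type*} (π : Pretop X) (f : X → Y) : Prop :=
  ∀ U V : Set X, (π.inh U).Nonempty → (π.inh V).Nonempty → (U ∩ V).Nonempty →
    ∃ y : Y, f ⁻¹' {y} ⊆ U ∩ V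

/-- The simple extension `Y⁺` determined by a dense subset `S`. -/
def extPlus {X : Type*} (ρ : Pretop X) (S : Set X) : Pretop X where
  V p := (ρ.V p).lift' (fun W => insert p (W ∩ S))
  pure_le p := le_lift'.mpr fun W _ => mem_pure.mpr (Set.mem_insert p _)

/-- `o(A) = {p : ∃ W ∈ V(p), W ∩ S = A}`. -/
def oSet {X : Type*} (ρ : Pretop X) (S : Set X) (A : Set X) : Set X :=
  {p | ∃ W ∈ ρ.V p, W ∩ S = A}

/-- The strict extension `Y^#` determined by a dense subset `S`. -/
def extSharp {X : Type*} (ρ : Pretop X) (S : Set X) : Pretop X where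
  V p := (ρ.V p).lift' (fun W => oSet ρ S (W ∩ S))
  pure_le p := le_lift'.mpr fun W hW => mem_pure.mpr ⟨W, hW, rfl⟩

/-- The θ-pretopology of a topological space: vicinities are closed neighborhoods. -/
def theta (X : Type*) [TopologicalSpace X] : Pretop X where
  V x := (nhds x).lift' closure
  pure_le x := le_lift'.mpr fun U hU =>
    mem_pure.mpr (subset_closure (mem_of_mem_nhds hU))


/-!
A point lies outside the π-adherence of `F` exactly when one of its vicinities has its
complement in `F`. Since `inh_π Uᶜ = (adh_π U)ᶜ`, a vicinity `adh_π U` of `rπ` whose complement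
lies in `F` makes `Uᶜ` a member of `F¹`; so `adh_π F¹ ⊆ adh_{rπ} F` and (4) gives (1). Compactness
of `rπ` yields finite subcovers of the `rπ`-cover `{adh_π C : C ∈ C}`, which is (2). Given (2) and
an inherent filter with empty adherence, the sets whose complement is in `F` form a π-cover; a
finite subfamily has adherences covering `X`, so the inherence of the complement of its union, a
member of `F`, is empty. Finally `F¹` is inherent whenever `F` is proper.
-/

namespace Pretop

variable {X : Type*} (π : Pretop X)

lemma inh_compl (A : Set X) : π.inh Aᶜ = (π.adhS A)ᶜ := by
  rw [inh, compl_compl]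

lemma notMem_adh_iff {F : Filter X} {x : X} : x ∉ π.adh F ↔ ∃ U ∈ π.V x, Uᶜ ∈ F := by
  simp only [adh, Meets, mem_ofPred_eq, not_forall, not_nonempty_iff_eq_empty, exists_prop]
  constructor
  · rintro ⟨U, hU, B, hB, hUB⟩
    exact ⟨U, hU, mem_of_superset hB fun y hyB hyU => (hUB ▸ ⟨hyU, hyB⟩ : y ∈ (∅ : Set X))⟩
  · rintro ⟨U, hU, hUc⟩
    exact ⟨U, hU, Uᶜ, hUc, inter_compl_self U⟩

lemma adh_F1_subset_adh_rpre (F : Filter X) : π.adh (π.F1 F) ⊆ π.rpre.adh F := by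
  intro x hx
  by_contra hxr
  obtain ⟨A, hA, hAc⟩ := π.rpre.notMem_adh_iff.mp hxr
  obtain ⟨U, hU, hUA⟩ := π.mem_rpre.mp hA
  have hinh : π.inh Uᶜ ∈ F :=
    mem_of_superset hAc (by rw [inh_compl]; exact compl_subset_compl.mpr hUA)
  exact π.notMem_adh_iff.mpr ⟨U, hU, π.mem_F1.mpr ⟨mem_of_superset hinh (π.inh_subset _), hinh⟩⟩ hx

lemma IsCompactPre.exists_finset_biUnion_eq_univ {π : Pretop X} (h : π.IsCompactPre)
    {C : Set (Set X)} (hC : π.IsCover C univ) :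
    ∃ D : Finset (Set X), ↑D ⊆ C ∧ ⋃ U ∈ D, U = univ := by
  by_contra! hno
  have hF : (generate (compl '' C)).NeBot := by
    refine generate_neBot_iff.mpr fun t ht htfin => ?_
    obtain ⟨u, huC, rfl⟩ := subset_image_iff.mp ht
    lift u to Finset (Set X) using htfin.of_finite_image compl_injective.injOn
    rw [← compl_sUnion, nonempty_compl, sUnion_eq_biUnion]
    exact hno u huC
  obtain ⟨x, hx⟩ := h _ hF
  obtain ⟨U, hUC, hU⟩ := hC x (mem_univ x)
  exact π.notMem_adh_iff.mpr ⟨U, hU, mem_generate_of_mem (mem_image_of_mem _ hUC)⟩ hx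

variable {π} in
lemma IsCover.rpre_adhS_image {C : Set (Set X)} (hC : π.IsCover C univ) :
    π.rpre.IsCover (π.adhS '' C) univ := fun x hx => by
  obtain ⟨U, hUC, hU⟩ := hC x hx
  exact ⟨π.adhS U, mem_image_of_mem _ hUC, π.mem_rpre.mpr ⟨U, hU, subset_rfl⟩⟩

lemma isCover_compl_mem_of_adh_eq_empty {F : Filter X} (h : π.adh F = ∅) :
    π.IsCover {U | Uᶜ ∈ F} univ := fun x _ =>
  let ⟨U, hU, hUc⟩ := π.notMem_adh_iff.mp (h ▸ notMem_empty x)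
  ⟨U, hUc, hU⟩

end Pretop

theorem phc_tfae_general {X : Type*} (π : Pretop X) :
    List.TFAE [
      (π.rpre).IsCompactPre,
      ∀ C : Set (Set X), π.IsCover C Set.univ →
        ∃ D : Finset (Set X), ↑D ⊆ C ∧ (⋃ U ∈ D, π.adhS U) = Set.univ,
      ∀ F : Filter X, (∀ B ∈ F, (π.inh B).Nonempty) → (π.adh F).Nonempty,
      ∀ F : Filter X, F.NeBot → (π.adh (π.F1 F)).Nonempty] := by
  classical
  tfae_have 1 → 2 := fun h C hC => by
    obtain ⟨D, hDC, hD⟩ := h.exists_finset_biUnion_eq_univ hC.rpre_adhS_image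
    obtain ⟨E, hEC, rfl⟩ := Finset.subset_set_image_iff.mp hDC
    exact ⟨E, hEC, by rwa [Finset.set_biUnion_finset_image] at hD⟩
  tfae_have 2 → 3 := fun h F hF => by
    by_contra hadh
    obtain ⟨D, hDC, hD⟩ :=
      h _ (π.isCover_compl_mem_of_adh_eq_empty (not_nonempty_iff_eq_empty.mp hadh))
    have hB : (⋃ U ∈ D, U)ᶜ ∈ F := by
      simpa only [compl_iUnion] using (biInter_finset_mem D).mpr fun U hU => hDC hU
    obtain ⟨x, hx⟩ := hF _ hB
    obtain ⟨U, hUD, hxU⟩ := mem_iUnion₂.mp (hD ▸ mem_univ x)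
    rw [π.inh_compl] at hx
    exact hx (π.adhS_mono (subset_biUnion_of_mem hUD) hxU)
  tfae_have 3 → 4 := fun h F _ => h (π.F1 F) fun _ hB => nonempty_of_mem hB.2
  tfae_have 4 → 1 := fun h F hF => (h F hF).mono (π.adh_F1_subset_adh_rpre F)
  tfae_finish

/-- Characterizations of PHC spaces. -/
theorem phc_tfae {X : Type*} (π : Pretop X) (hH : π.HausdorffPre) :
    List.TFAE [
      (π.rpre).IsCompactPre,
      ∀ C : Set (Set X), π.IsCover C Set.univ →
        ∃ D : Finset (Set X), ↑D ⊆ C ∧ (⋃ U ∈ D, π.adhS U) = Set.univ,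
      ∀ F : Filter X, (∀ B ∈ F, (π.inh B).Nonempty) → (π.adh F).Nonempty,
      ∀ F : Filter X, F.NeBot → (π.adh (π.F1 F)).Nonempty] :=
  phc_tfae_general π
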